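/- arXiv:1206.5155 — 2 statements merged into one kernel-verified Lean document; each statement's English description precedes it below -/
import Mathlib

section
/- Let A be a commutative ring and J a finitely generated ideal of A. Then the completion of J (with respect to the topology induced from the J-adic topology of A) equals Â·J, and for every n ≥ 0 the completion of J^n equals (Ĵ)^n, where Â denotes the J-adic completion of A. -/
/-!
STATEMENT 1: Let `A` be a commutative ring and `J` a finitely generated ideal of `A`.
Then the completion of `J` (with respect to the topology induced from the `J`-adic
topology of `A`), i.e. the closure `Ĵ` of the image of `J` in the `J`-adic completion
`Â`, equals `Â·J`; and for every `n ≥ 0` the completion of `J^n` equals `Ĵ^n`.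
-/

open AdicCompletion

variable {A : Type*} [CommRing A]

/-- The completion of an ideal `K ⊆ A` with respect to the subspace filtration
induced from the `J`-adic topology of `A`, realized as the closure of the image of
`K` inside the `J`-adic completion `Â = lim A/J^n`: it consists of those elements
whose `n`-th component lies in the image of `K` in `A/J^n` for every `n`. -/
def idealCompletion (J K : Ideal A) : Ideal (AdicCompletion J A) where
  carrier := {x | ∀ n : ℕ,
    x.val n ∈ Submodule.map (Submodule.mkQ (J ^ n • ⊤ : Submodule A A)) (K : Submodule A A)}
  zero_mem' := fun n => by
    simp only [AdicCompletion.val_zero]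
    exact Submodule.zero_mem _
  add_mem' := fun {x y} hx hy n => by
    rw [AdicCompletion.val_add]
    exact Submodule.add_mem _ (hx n) (hy n)
  smul_mem' := fun c x hx n => by
    obtain ⟨k, hkK, hk⟩ := Submodule.mem_map.mp (hx n)
    obtain ⟨a, ha⟩ := Submodule.mkQ_surjective (J ^ n • ⊤ : Submodule A A) (c.val n)
    have hval : (c • x).val n = c.val n • x.val n := rfl
    show (c • x).val n ∈ _
    rw [hval, ← ha, ← hk]
    refine ⟨a • k, K.smul_mem a hkK, ?_⟩
    rfl

/-! The completion of `J ^ m` is the kernel of `Â → A/J^m`: an element of the completion has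
`m`-th component in `J^m/J^m = 0`, and conversely a compatible family vanishing at level `m`
has all its components in `J^m/J^n`. For finitely generated `J` that kernel is `J^m Â`, which
is the ideal generated by the image of `J ^ m` (Mathlib's `pow_smul_top_eq_ker_eval`). -/

lemma mem_idealCompletion_pow_iff (J : Ideal A) (m : ℕ) (x : AdicCompletion J A) :
    x ∈ idealCompletion J (J ^ m) ↔ x.val m = 0 := by
  have hJm : (J ^ m • ⊤ : Submodule A A) = J ^ m := by rw [smul_eq_mul, Ideal.mul_top]
  constructor
  · intro hx
    obtain ⟨a, ha, hax⟩ := hx m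
    rw [← hax, Submodule.mkQ_apply, Submodule.Quotient.mk_eq_zero, hJm]
    exact ha
  · intro hx n
    obtain ⟨a, ha⟩ := Submodule.mkQ_surjective _ (x.val (max m n))
    have hxm : x.val m = Submodule.Quotient.mk a := by
      rw [← transitionMap_comp_eval_apply J A (le_max_left m n), ← ha]; rfl
    have hxn : x.val n = Submodule.Quotient.mk a := by
      rw [← transitionMap_comp_eval_apply J A (le_max_right m n), ← ha]; rfl
    refine ⟨a, ?_, hxn.symm⟩
    rw [hx, eq_comm, Submodule.Quotient.mk_eq_zero, hJm] at hxm
    exact hxm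

lemma mem_map_algebraMap_pow_iff {J : Ideal A} (hJ : J.FG) (m : ℕ) (x : AdicCompletion J A) :
    x ∈ (J ^ m).map (algebraMap A (AdicCompletion J A)) ↔ x.val m = 0 := by
  rw [← Submodule.restrictScalars_mem A, ← Ideal.smul_top_eq_map, pow_smul_top_eq_ker_eval hJ]
  rfl

lemma idealCompletion_pow_eq_map {J : Ideal A} (hJ : J.FG) (m : ℕ) :
    idealCompletion J (J ^ m) = (J ^ m).map (algebraMap A (AdicCompletion J A)) :=
  Ideal.ext fun x =>
    (mem_idealCompletion_pow_iff J m x).trans (mem_map_algebraMap_pow_iff hJ m x).symm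

theorem idealCompletion_eq_map_and_pow (J : Ideal A) (hJ : J.FG) :
    idealCompletion J J = J.map (algebraMap A (AdicCompletion J A)) ∧
      ∀ n : ℕ, idealCompletion J (J ^ n) = (idealCompletion J J) ^ n := by
  have h1 : idealCompletion J J = J.map (algebraMap A (AdicCompletion J A)) := by
    simpa using idealCompletion_pow_eq_map hJ 1
  exact ⟨h1, fun n => by rw [idealCompletion_pow_eq_map hJ, Ideal.map_pow, h1]⟩
end

section
/- Let A be a commutative ring complete with respect to an ideal J (i.e. A is isomorphic to its J-adic completion), and let M be an A-module which is separated, meaning the intersection of J^k M over all k is zero. If elements m_1, …, m_n of M have images generating M/JM as an A/J-module, then m_1, …, m_n generate M as an A-module. -/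
/-!
The coefficient map `Aⁿ → M`, `c ↦ ∑ cᵢ mᵢ`, is surjective modulo `J`. Since `Aⁿ` is
`J`-adically complete, successive approximation lifts any `x ∈ M` to a coefficient vector whose
image agrees with `x` modulo every `J ^ k M`, hence equals `x` because `M` is separated.
-/

open Submodule

section Pi

variable {R ι : Type*} {M : ι → Type*} [Finite ι]

theorem Submodule.mem_smul_top_pi_iff [Semiring R] [∀ i, AddCommMonoid (M i)]
    [∀ i, Module R (M i)] (I : Ideal R) (x : ∀ i, M i) :
    x ∈ (I • ⊤ : Submodule R (∀ i, M i)) ↔ ∀ i, x i ∈ (I • ⊤ : Submodule R (M i)) := by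
  classical
  have := Fintype.ofFinite ι
  refine ⟨fun hx i ↦ smul_top_le_comap_smul_top I (LinearMap.proj i) hx, fun hx ↦ ?_⟩
  rw [← Finset.univ_sum_single x]
  exact sum_mem fun i _ ↦ smul_top_le_comap_smul_top I (LinearMap.single R M i) (hx i)

variable [CommRing R] [∀ i, AddCommGroup (M i)] [∀ i, Module R (M i)]

theorem SModEq.smul_top_pi_iff (I : Ideal R) {x y : ∀ i, M i} :
    x ≡ y [SMOD (I • ⊤ : Submodule R (∀ i, M i))] ↔
      ∀ i, x i ≡ y i [SMOD (I • ⊤ : Submodule R (M i))] := by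
  simp only [SModEq.sub_mem, mem_smul_top_pi_iff, Pi.sub_apply]

instance IsPrecomplete.pi (I : Ideal R) [∀ i, IsPrecomplete I (M i)] :
    IsPrecomplete I (∀ i, M i) where
  prec' f hf := by
    choose L hL using fun i ↦ IsPrecomplete.prec inferInstance (f := (f · i))
      fun hmn ↦ (SModEq.smul_top_pi_iff _).1 (hf hmn) i
    exact ⟨L, fun n ↦ (SModEq.smul_top_pi_iff _).2 fun i ↦ hL i n⟩

end Pi

theorem IsHausdorff.of_iInf_pow_smul_eq_bot {R M : Type*} [CommRing R] [AddCommGroup M]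
    [Module R M] {I : Ideal R} (h : (⨅ n : ℕ, I ^ n • ⊤ : Submodule R M) = ⊥) : IsHausdorff I M :=
  ⟨fun x hx ↦ by simpa [h, SModEq.zero] using (mem_iInf _).2 fun n ↦ SModEq.zero.1 (hx n)⟩

theorem Submodule.span_range_eq_top_of_sup_smul_top_eq_top {R M ι : Type*} [CommRing R]
    [AddCommGroup M] [Module R M] [Finite ι] {I : Ideal R} [IsPrecomplete I R] [IsHausdorff I M]
    {v : ι → M} (hv : span R (Set.range v) ⊔ I • ⊤ = ⊤) : span R (Set.range v) = ⊤ := by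
  have := Fintype.ofFinite ι
  rw [← Fintype.range_linearCombination, LinearMap.range_eq_top]
  refine surjective_of_mkQ_comp_surjective (I := I) ?_
  rw [← LinearMap.range_eq_top, LinearMap.range_comp, Fintype.range_linearCombination,
    map_mkQ_eq_top, sup_comm, hv]

theorem nakayama_of_complete_of_separated
    (A : Type*) [CommRing A] (J : Ideal A) [IsAdicComplete J A]
    (M : Type*) [AddCommGroup M] [Module A M]
    (hsep : (⨅ k : ℕ, (J ^ k • ⊤ : Submodule A M)) = ⊥)
    (n : ℕ) (m : Fin n → M)
    (hgen : Submodule.span A (Set.range m) ⊔ (J • ⊤ : Submodule A M) = ⊤) :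
    Submodule.span A (Set.range m) = ⊤ :=
  have := IsHausdorff.of_iInf_pow_smul_eq_bot hsep
  span_range_eq_top_of_sup_smul_top_eq_top hgen
end
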